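/- Let (Δ_E, Δ_V, δ_V) and (Δ'_E, Δ'_V, δ'_V) be two Lie coalgebraic extending structures of a Lie coalgebra (g, δ_g) by V, with unified co-products g ♮^c V and g ♮^{c'} V. For linear maps p : V → g and q : V → V, define φ_{p,q} : g ⊕ V → g ⊕ V by φ_{p,q}(a + x) = a + p(x) + q(x). Then φ_{p,q} is a homomorphism of Lie coalgebras from g ♮^c V to g ♮^{c'} V if and only if for all x ∈ V: (1) δ_g(p(x)) + Δ'_V(q(x)) = (I⊗p)Δ_E(x) − (p⊗I)τΔ_E(x) + (p⊗p)δ_V(x) + Δ_V(x); (2) Δ'_E(q(x)) = (I⊗q)Δ_E(x) + (p⊗q)δ_V(x); (3) δ'_V(q(x)) = (q⊗q)δ_V(x). Moreover, φ_{p,q} is an isomorphism if and only if q is a linear isomorphism. -/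

import Mathlib

/-!
`(g × V) ⊗ (g × V)` splits into the four blocks `g ⊗ g`, `g ⊗ V`, `V ⊗ g`, `V ⊗ V`. Since
`φ_{p,q}` is the identity on `g` and sends `x ∈ V` to `p x + q x`, comparing the blocks of the
two sides of the morphism identity at `a + x` gives (1), (2), (3), and one more identity in
`V ⊗ g`; that one is the flip of (2), because `δ_V` is anti-cocommutative. As for bijectivity,
`φ_{p,q}` is block triangular with diagonal blocks `id` and `q`.
-/

open TensorProduct LinearMap

noncomputable section

/-- The flip `A ⊗ B → B ⊗ A`. -/
def flipT (k A B : Type*) [Field k] [AddCommGroup A] [Module k A]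
    [AddCommGroup B] [Module k B] : A ⊗[k] B →ₗ[k] B ⊗[k] A :=
  (TensorProduct.comm k A B).toLinearMap

/-- Swap of the first two tensor factors `A ⊗ (B ⊗ C) → B ⊗ (A ⊗ C)`. -/
def swap12 (k A B C : Type*) [Field k] [AddCommGroup A] [Module k A]
    [AddCommGroup B] [Module k B] [AddCommGroup C] [Module k C] :
    A ⊗[k] (B ⊗[k] C) →ₗ[k] B ⊗[k] (A ⊗[k] C) :=
  (TensorProduct.assoc k B A C).toLinearMap ∘ₗ
    rTensor C (flipT k A B) ∘ₗ (TensorProduct.assoc k A B C).symm.toLinearMap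

/-- Associator as a linear map. -/
def asr (k A B C : Type*) [Field k] [AddCommGroup A] [Module k A]
    [AddCommGroup B] [Module k B] [AddCommGroup C] [Module k C] :
    (A ⊗[k] B) ⊗[k] C →ₗ[k] A ⊗[k] (B ⊗[k] C) :=
  (TensorProduct.assoc k A B C).toLinearMap

/-- `δ : M → M ⊗ M` is a Lie coalgebra structure: anti-cocommutativity and co-Jacobi. -/
def IsLieCoalgebra {k M : Type*} [Field k] [AddCommGroup M] [Module k M]
    (δ : M →ₗ[k] M ⊗[k] M) : Prop :=
  (∀ m, flipT k M M (δ m) = - δ m) ∧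
  (∀ m, lTensor M δ (δ m) - swap12 k M M M (lTensor M δ (δ m)) =
      asr k M M M (rTensor M δ (δ m)))

/-- A (bilinear) map `b` is a Lie bracket: alternating and Jacobi (in Leibniz form). -/
def IsLieBracket {k L : Type*} [Field k] [AddCommGroup L] [Module k L]
    (b : L →ₗ[k] L →ₗ[k] L) : Prop :=
  (∀ a, b a a = 0) ∧ (∀ a c d, b a (b c d) = b (b a c) d + b c (b a d))

/-- The adjoint action of `a` on `L ⊗ L`: `a.(Σ b₁⊗b₂) = Σ [a,b₁]⊗b₂ + b₁⊗[a,b₂]`. -/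
def adT {k L : Type*} [Field k] [AddCommGroup L] [Module k L]
    (b : L →ₗ[k] L →ₗ[k] L) (a : L) : L ⊗[k] L →ₗ[k] L ⊗[k] L :=
  rTensor L (b a) + lTensor L (b a)

/-- `(L, b, δ)` is a Lie bialgebra. -/
def IsLieBialgebra {k L : Type*} [Field k] [AddCommGroup L] [Module k L]
    (b : L →ₗ[k] L →ₗ[k] L) (δ : L →ₗ[k] L ⊗[k] L) : Prop :=
  IsLieBracket b ∧ IsLieCoalgebra δ ∧
    ∀ a c, δ (b a c) = adT b a (δ c) - adT b c (δ a)

variable {k g V : Type*} [Field k] [CharZero k]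
  [AddCommGroup g] [Module k g] [AddCommGroup V] [Module k V]

/-- The unified co-product map on `E = g ⊕ V`:
`δ_E(a + x) = δ_g(a) + Δ_E(x) − τΔ_E(x) + Δ_V(x) + δ_V(x)`. -/
def uniCoprod (δg : g →ₗ[k] g ⊗[k] g) (ΔE : V →ₗ[k] g ⊗[k] V)
    (ΔV : V →ₗ[k] g ⊗[k] g) (δV : V →ₗ[k] V ⊗[k] V) :
    (g × V) →ₗ[k] (g × V) ⊗[k] (g × V) :=
  map (inl k g V) (inl k g V) ∘ₗ δg ∘ₗ fst k g V +
    (map (inl k g V) (inr k g V) ∘ₗ ΔE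
      - map (inr k g V) (inl k g V) ∘ₗ flipT k g V ∘ₗ ΔE
      + map (inl k g V) (inl k g V) ∘ₗ ΔV
      + map (inr k g V) (inr k g V) ∘ₗ δV) ∘ₗ snd k g V

/-- Conditions (CLE1)–(CLE5): `(Δ_E, Δ_V, δ_V)` is a Lie coalgebraic extending
structure of `(g, δ_g)` by `V`. -/
def IsCoalgExtStructure (δg : g →ₗ[k] g ⊗[k] g) (ΔE : V →ₗ[k] g ⊗[k] V)
    (ΔV : V →ₗ[k] g ⊗[k] g) (δV : V →ₗ[k] V ⊗[k] V) : Prop :=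
  -- (CLE1)
  (∀ x, flipT k g g (ΔV x) = - ΔV x) ∧ (∀ x, flipT k V V (δV x) = - δV x) ∧
  -- (CLE2)
  (∀ x, lTensor g ΔV (ΔE x) + lTensor g δg (ΔV x)
      - swap12 k g g g (lTensor g ΔV (ΔE x)) - swap12 k g g g (lTensor g δg (ΔV x)) =
      - asr k g g g (rTensor g ΔV (flipT k g V (ΔE x)))
      + asr k g g g (rTensor g δg (ΔV x))) ∧
  -- (CLE3)
  (∀ x, lTensor g ΔE (ΔE x) - swap12 k g g V (lTensor g ΔE (ΔE x)) =
      asr k g g V (rTensor V δg (ΔE x)) + asr k g g V (rTensor V ΔV (δV x))) ∧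
  -- (CLE4)
  (∀ x, lTensor g δV (ΔE x) - swap12 k V g V (lTensor V ΔE (δV x)) =
      asr k g V V (rTensor V ΔE (δV x))) ∧
  -- (CLE5)
  (∀ x, lTensor V δV (δV x) - swap12 k V V V (lTensor V δV (δV x)) =
      asr k V V V (rTensor V δV (δV x)))

end
noncomputable section
variable {k g V : Type*} [Field k] [CharZero k]
  [AddCommGroup g] [Module k g] [AddCommGroup V] [Module k V]

/-- The map `φ_{p,q} : g ⊕ V → g ⊕ V`, `φ_{p,q}(a + x) = a + p(x) + q(x)`. -/
def phiPQ (k : Type*) [Field k] {g V : Type*} [AddCommGroup g] [Module k g]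
    [AddCommGroup V] [Module k V] (p : V →ₗ[k] g) (q : V →ₗ[k] V) :
    (g × V) →ₗ[k] (g × V) :=
  (fst k g V + p ∘ₗ snd k g V).prod (q ∘ₗ snd k g V)

namespace TensorProduct

variable {R M N : Type*} [CommSemiring R] [AddCommMonoid M] [Module R M]
  [AddCommMonoid N] [Module R N]

theorem prod_components_eq_iff {s s' : M ⊗[R] M} {t t' : M ⊗[R] N} {u u' : N ⊗[R] M}
    {w w' : N ⊗[R] N} :
    map (inl R M N) (inl R M N) s + map (inl R M N) (inr R M N) t
        + map (inr R M N) (inl R M N) u + map (inr R M N) (inr R M N) w =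
      map (inl R M N) (inl R M N) s' + map (inl R M N) (inr R M N) t'
        + map (inr R M N) (inl R M N) u' + map (inr R M N) (inr R M N) w' ↔
      s = s' ∧ t = t' ∧ u = u' ∧ w = w' := by
  refine ⟨fun h => ?_, by rintro ⟨rfl, rfl, rfl, rfl⟩; rfl⟩
  refine ⟨?_, ?_, ?_, ?_⟩
  · simpa [map_map] using congrArg (map (fst R M N) (fst R M N)) h
  · simpa [map_map] using congrArg (map (fst R M N) (snd R M N)) h
  · simpa [map_map] using congrArg (map (snd R M N) (fst R M N)) h
  · simpa [map_map] using congrArg (map (snd R M N) (snd R M N)) h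

end TensorProduct

section

variable {k : Type*} [Field k]

theorem flipT_map {A B C D : Type*} [AddCommGroup A] [Module k A] [AddCommGroup B] [Module k B]
    [AddCommGroup C] [Module k C] [AddCommGroup D] [Module k D]
    (f : A →ₗ[k] C) (h : B →ₗ[k] D) (t : A ⊗[k] B) :
    flipT k C D (map f h t) = map h f (flipT k A B t) :=
  (map_comm h f t).symm

theorem flipT_lTensor {A B D : Type*} [AddCommGroup A] [Module k A] [AddCommGroup B]
    [Module k B] [AddCommGroup D] [Module k D] (h : B →ₗ[k] D) (t : A ⊗[k] B) :
    flipT k A D (lTensor A h t) = rTensor A h (flipT k A B t) :=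
  flipT_map LinearMap.id h t

variable {g V : Type*} [AddCommGroup g] [Module k g] [AddCommGroup V] [Module k V]

theorem phiPQ_apply (p : V →ₗ[k] g) (q : V →ₗ[k] V) (a : g) (x : V) :
    phiPQ k p q (a, x) = (a + p x, q x) := rfl

theorem phiPQ_comp_inl (p : V →ₗ[k] g) (q : V →ₗ[k] V) :
    phiPQ k p q ∘ₗ inl k g V = inl k g V := by
  ext a <;> simp [phiPQ_apply]

theorem phiPQ_comp_inr (p : V →ₗ[k] g) (q : V →ₗ[k] V) :
    phiPQ k p q ∘ₗ inr k g V = inl k g V ∘ₗ p + inr k g V ∘ₗ q := by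
  ext x <;> simp [phiPQ_apply]

theorem phiPQ_bijective_iff (p : V →ₗ[k] g) (q : V →ₗ[k] V) :
    Function.Bijective (phiPQ k p q) ↔ Function.Bijective q := by
  refine ⟨fun h => ⟨fun x y hxy => ?_, fun y => ?_⟩, fun hq => ?_⟩
  · have := h.1 (a₁ := (-p x, x)) (a₂ := (-p y, y)) (by simp [phiPQ_apply, hxy])
    exact congrArg Prod.snd this
  · obtain ⟨e, he⟩ := h.2 (0, y)
    exact ⟨e.2, congrArg Prod.snd he⟩
  · let e := LinearEquiv.ofBijective q hq
    refine Function.bijective_iff_has_inverse.mpr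
      ⟨fun z => (z.1 - p (e.symm z.2), e.symm z.2), ?_, ?_⟩ <;>
    · rintro ⟨a, x⟩
      simp [phiPQ_apply, e]

theorem uniCoprod_apply (δg : g →ₗ[k] g ⊗[k] g) (ΔE : V →ₗ[k] g ⊗[k] V)
    (ΔV : V →ₗ[k] g ⊗[k] g) (δV : V →ₗ[k] V ⊗[k] V) (a : g) (x : V) :
    uniCoprod δg ΔE ΔV δV (a, x) =
      map (inl k g V) (inl k g V) (δg a + ΔV x) + map (inl k g V) (inr k g V) (ΔE x)
        + map (inr k g V) (inl k g V) (-flipT k g V (ΔE x))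
        + map (inr k g V) (inr k g V) (δV x) := by
  simp only [uniCoprod, LinearMap.add_apply, LinearMap.sub_apply, coe_comp,
    Function.comp_apply, fst_apply, snd_apply, map_add, map_neg]
  abel

theorem map_phiPQ_uniCoprod (δg : g →ₗ[k] g ⊗[k] g) (ΔE : V →ₗ[k] g ⊗[k] V)
    (ΔV : V →ₗ[k] g ⊗[k] g) (δV : V →ₗ[k] V ⊗[k] V)
    (p : V →ₗ[k] g) (q : V →ₗ[k] V) (a : g) (x : V) :
    map (phiPQ k p q) (phiPQ k p q) (uniCoprod δg ΔE ΔV δV (a, x)) =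
      map (inl k g V) (inl k g V)
          (δg a + ΔV x + lTensor g p (ΔE x) - rTensor g p (flipT k g V (ΔE x))
            + map p p (δV x))
        + map (inl k g V) (inr k g V) (lTensor g q (ΔE x) + map p q (δV x))
        + map (inr k g V) (inl k g V)
            (- rTensor g q (flipT k g V (ΔE x)) + map q p (δV x))
        + map (inr k g V) (inr k g V) (map q q (δV x)) := by
  simp only [uniCoprod_apply, map_add, map_neg, map_map, phiPQ_comp_inl, phiPQ_comp_inr,
    map_add_left, map_add_right, LinearMap.add_apply, lTensor, rTensor, map_sub, comp_id]
  abel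

theorem map_phiPQ_uniCoprod_eq_iff (δg : g →ₗ[k] g ⊗[k] g)
    (ΔE : V →ₗ[k] g ⊗[k] V) (ΔV : V →ₗ[k] g ⊗[k] g) (δV : V →ₗ[k] V ⊗[k] V)
    (ΔE' : V →ₗ[k] g ⊗[k] V) (ΔV' : V →ₗ[k] g ⊗[k] g) (δV' : V →ₗ[k] V ⊗[k] V)
    (hδV : ∀ x, flipT k V V (δV x) = - δV x) (p : V →ₗ[k] g) (q : V →ₗ[k] V) (a : g) (x : V) :
    map (phiPQ k p q) (phiPQ k p q) (uniCoprod δg ΔE ΔV δV (a, x)) =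
        uniCoprod δg ΔE' ΔV' δV' (phiPQ k p q (a, x)) ↔
      (δg (p x) + ΔV' (q x) =
          lTensor g p (ΔE x) - rTensor g p (flipT k g V (ΔE x)) + map p p (δV x) + ΔV x) ∧
      ΔE' (q x) = lTensor g q (ΔE x) + map p q (δV x) ∧
      δV' (q x) = map q q (δV x) := by
  have hgg : δg a + ΔV x + lTensor g p (ΔE x) - rTensor g p (flipT k g V (ΔE x))
        + map p p (δV x) = δg (a + p x) + ΔV' (q x) ↔
      δg (p x) + ΔV' (q x) =
        lTensor g p (ΔE x) - rTensor g p (flipT k g V (ΔE x)) + map p p (δV x) + ΔV x := by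
    rw [← sub_eq_zero, ← neg_eq_zero, ← sub_eq_zero (a := δg (p x) + ΔV' (q x)), map_add,
      neg_sub]
    convert Iff.rfl using 2
    abel
  rw [map_phiPQ_uniCoprod, phiPQ_apply, uniCoprod_apply, TensorProduct.prod_components_eq_iff,
    hgg]
  constructor
  · rintro ⟨h1, h2, -, h3⟩
    exact ⟨h1, h2.symm, h3.symm⟩
  · rintro ⟨h1, h2, h3⟩
    refine ⟨h1, h2.symm, ?_, h3.symm⟩
    rw [h2, map_add, flipT_lTensor, flipT_map, hδV, map_neg]
    abel

end

theorem coalgHom_iff_pq_general (δg : g →ₗ[k] g ⊗[k] g)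
    (ΔE : V →ₗ[k] g ⊗[k] V) (ΔV : V →ₗ[k] g ⊗[k] g) (δV : V →ₗ[k] V ⊗[k] V)
    (ΔE' : V →ₗ[k] g ⊗[k] V) (ΔV' : V →ₗ[k] g ⊗[k] g) (δV' : V →ₗ[k] V ⊗[k] V)
    (hΩ : IsCoalgExtStructure δg ΔE ΔV δV)
    (p : V →ₗ[k] g) (q : V →ₗ[k] V) :
    ((∀ e, map (phiPQ k p q) (phiPQ k p q) (uniCoprod δg ΔE ΔV δV e) =
        uniCoprod δg ΔE' ΔV' δV' (phiPQ k p q e)) ↔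
      (∀ x, δg (p x) + ΔV' (q x) =
          lTensor g p (ΔE x) - rTensor g p (flipT k g V (ΔE x))
            + map p p (δV x) + ΔV x) ∧
      (∀ x, ΔE' (q x) = lTensor g q (ΔE x) + map p q (δV x)) ∧
      (∀ x, δV' (q x) = map q q (δV x))) ∧
    (Function.Bijective (phiPQ k p q) ↔ Function.Bijective q) := by
  refine ⟨?_, phiPQ_bijective_iff p q⟩
  simp only [Prod.forall, map_phiPQ_uniCoprod_eq_iff _ _ _ _ _ _ _ hΩ.2.1, forall_const,
    forall_and]

/-- **Lemma.** For two Lie coalgebraic extending structures of `(g, δ_g)` by `V`,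
`φ_{p,q}` is a morphism of Lie coalgebras between the unified co-products iff
conditions (1)–(3) hold; moreover `φ_{p,q}` is an isomorphism iff `q` is a linear
isomorphism. -/
theorem coalgHom_iff_pq (δg : g →ₗ[k] g ⊗[k] g) (hδg : IsLieCoalgebra δg)
    (ΔE : V →ₗ[k] g ⊗[k] V) (ΔV : V →ₗ[k] g ⊗[k] g) (δV : V →ₗ[k] V ⊗[k] V)
    (ΔE' : V →ₗ[k] g ⊗[k] V) (ΔV' : V →ₗ[k] g ⊗[k] g) (δV' : V →ₗ[k] V ⊗[k] V)
    (hΩ : IsCoalgExtStructure δg ΔE ΔV δV)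
    (hΩ' : IsCoalgExtStructure δg ΔE' ΔV' δV')
    (p : V →ₗ[k] g) (q : V →ₗ[k] V) :
    ((∀ e, map (phiPQ k p q) (phiPQ k p q) (uniCoprod δg ΔE ΔV δV e) =
        uniCoprod δg ΔE' ΔV' δV' (phiPQ k p q e)) ↔
      (∀ x, δg (p x) + ΔV' (q x) =
          lTensor g p (ΔE x) - rTensor g p (flipT k g V (ΔE x))
            + map p p (δV x) + ΔV x) ∧
      (∀ x, ΔE' (q x) = lTensor g q (ΔE x) + map p q (δV x)) ∧
      (∀ x, δV' (q x) = map q q (δV x))) ∧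
    (Function.Bijective (phiPQ k p q) ↔ Function.Bijective q) :=
  coalgHom_iff_pq_general δg ΔE ΔV δV ΔE' ΔV' δV' hΩ p q

end
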